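/- For integers n ≥ m ≥ 0, s(n,m) = \sum_{k=0}^{n-m} (-1)^k \binom{n-1+k}{n-m+k} \binom{2n-m}{n-m-k} S(n-m+k, k), where s denotes signed Stirling numbers of the first kind and S denotes Stirling numbers of the second kind. -/

import Mathlib

/-- Signed Stirling numbers of the first kind. -/
def s1 : ℕ → ℕ → ℤ
  | 0, 0 => 1
  | 0, _ + 1 => 0
  | _ + 1, 0 => 0
  | n + 1, m + 1 => s1 n m - n * s1 n (m + 1)

/-- Stirling numbers of the second kind. -/
def s2 : ℕ → ℕ → ℤ
  | 0, 0 => 1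
  | 0, _ + 1 => 0
  | _ + 1, 0 => 0
  | n + 1, m + 1 => (m + 1) * s2 n (m + 1) + s2 n m

open Finset

lemma s2_rec (n m : ℕ) : s2 (n + 1) (m + 1) = (m + 1) * s2 n (m + 1) + s2 n m := rfl

lemma s2_zero (n : ℕ) : s2 (n + 1) 0 = 0 := rfl

lemma s2_of_lt : ∀ {n m : ℕ}, n < m → s2 n m = 0 := by
  intro n
  induction n with
  | zero => intro m h; match m, h with | m+1, _ => rfl
  | succ n ih =>
    intro m h
    match m, h with
    | m+1, h =>
      show (m + 1 : ℤ) * s2 n (m + 1) + s2 n m = 0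
      rw [ih (by omega), ih (by omega)]; ring

lemma s1_of_lt : ∀ {n m : ℕ}, n < m → s1 n m = 0 := by
  intro n
  induction n with
  | zero => intro m h; match m, h with | m+1, _ => rfl
  | succ n ih =>
    intro m h
    match m, h with
    | m+1, h =>
      show s1 n m - (n : ℤ) * s1 n (m+1) = 0
      rw [ih (by omega), ih (by omega)]; ring

lemma s2_diag (n : ℕ) : s2 n n = 1 := by
  induction n with
  | zero => rfl
  | succ n ih =>
    show (n + 1 : ℤ) * s2 n (n + 1) + s2 n n = 1
    rw [ih, s2_of_lt (Nat.lt_succ_self n)]; ring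

lemma s1_diag (n : ℕ) : s1 n n = 1 := by
  induction n with
  | zero => rfl
  | succ n ih =>
    show s1 n n - (n : ℤ) * s1 n (n+1) = 1
    rw [ih, s1_of_lt (Nat.lt_succ_self n)]; ring

/-- Abel summation against Stirling numbers of the second kind on a shifted diagonal. -/
lemma abel (g : ℕ → ℤ) (d e : ℕ) :
    ∑ k ∈ range (d + 1), (g k - g (k + 1)) * s2 (e + 1 + k) k
      = (∑ k ∈ range (d + 1), (k : ℤ) * g k * s2 (e + k) k)
        - g (d + 1) * s2 (e + 1 + d) d := by
  have h1 : ∑ k ∈ range (d + 1), (g k - g (k + 1)) * s2 (e + 1 + k) k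
      = (∑ k ∈ range (d + 1), g k * s2 (e + 1 + k) k)
        - ∑ k ∈ range (d + 1), g (k + 1) * s2 (e + 1 + k) k := by
    rw [← Finset.sum_sub_distrib]; congr 1; ext k; ring
  rw [h1]
  rw [Finset.sum_range_succ' (fun k => g k * s2 (e + 1 + k) k) d]
  rw [Finset.sum_range_succ (fun k => g (k + 1) * s2 (e + 1 + k) k) d]
  rw [Finset.sum_range_succ' (fun k => (k : ℤ) * g k * s2 (e + k) k) d]
  have h2 : ∀ k, g (k + 1) * s2 (e + 1 + (k + 1)) (k + 1)
      = ((k : ℤ) + 1) * g (k + 1) * s2 (e + (k + 1)) (k + 1)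
        + g (k + 1) * s2 (e + 1 + k) k := by
    intro k
    have h3 : e + 1 + (k + 1) = (e + 1 + k) + 1 := by ring
    rw [h3, s2_rec (e + 1 + k) k]
    have h4 : e + (k + 1) = e + 1 + k := by ring
    rw [h4]; ring
  rw [Finset.sum_congr rfl (fun k _ => h2 k)]
  rw [Finset.sum_add_distrib, s2_zero e]
  push_cast
  ring

noncomputable def W (j m e : ℕ) : ℤ :=
  ∑ k ∈ range (m + 1), (-1) ^ k * (k : ℤ) ^ j * (m.choose (e + k) : ℤ) * s2 (e + k) k

lemma W_rec (j m e : ℕ) :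
    W j (m + 1) (e + 1) = W (j + 1) m e + W j m (e + 1)
      - ∑ i ∈ range (j + 1), (j.choose i : ℤ) * W i m (e + 1) := by
  have expand : W j (m + 1) (e + 1)
      = (∑ k ∈ range (m + 2), (-1) ^ k * (k : ℤ) ^ j * (m.choose (e + k) : ℤ) * s2 (e + 1 + k) k)
        + ∑ k ∈ range (m + 2), (-1) ^ k * (k : ℤ) ^ j * (m.choose (e + 1 + k) : ℤ) * s2 (e + 1 + k) k := by
    rw [W, ← Finset.sum_add_distrib]
    apply Finset.sum_congr rfl
    intro k _
    have h1 : e + 1 + k = (e + k) + 1 := by ring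
    rw [h1, Nat.choose_succ_succ' m (e + k)]
    push_cast
    ring
  have hT2 : ∑ k ∈ range (m + 2), (-1) ^ k * (k : ℤ) ^ j * (m.choose (e + 1 + k) : ℤ) * s2 (e + 1 + k) k
      = W j m (e + 1) := by
    rw [W, Finset.sum_range_succ]
    rw [Nat.choose_eq_zero_of_lt (by omega : m < e + 1 + (m + 1))]
    push_cast; ring
  have hT1 : ∑ k ∈ range (m + 2), (-1) ^ k * (k : ℤ) ^ j * (m.choose (e + k) : ℤ) * s2 (e + 1 + k) k
      = W (j + 1) m e - ∑ i ∈ range (j + 1), (j.choose i : ℤ) * W i m (e + 1) := by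
    rw [Finset.sum_range_succ' (fun k => (-1) ^ k * (k : ℤ) ^ j * (m.choose (e + k) : ℤ) * s2 (e + 1 + k) k) (m + 1)]
    have h0 : ((-1 : ℤ)) ^ (0:ℕ) * ((0:ℕ) : ℤ) ^ j * (m.choose (e + 0) : ℤ) * s2 (e + 1 + 0) 0 = 0 := by
      rw [show e + 1 + 0 = e + 1 from rfl, s2_zero]; ring
    rw [h0, add_zero]
    have step : ∀ k : ℕ, (-1 : ℤ) ^ (k + 1) * ((k + 1 : ℕ) : ℤ) ^ j * (m.choose (e + (k + 1)) : ℤ) * s2 (e + 1 + (k + 1)) (k + 1)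
        = (-1 : ℤ) ^ (k + 1) * ((k + 1 : ℕ) : ℤ) ^ (j + 1) * (m.choose (e + (k + 1)) : ℤ) * s2 (e + (k + 1)) (k + 1)
          - ((k : ℤ) + 1) ^ j * ((-1) ^ k * (m.choose (e + 1 + k) : ℤ) * s2 (e + 1 + k) k) := by
      intro k
      have h1 : e + 1 + (k + 1) = (e + 1 + k) + 1 := by ring
      rw [h1, s2_rec (e + 1 + k) k]
      have h2 : e + (k + 1) = e + 1 + k := by ring
      rw [h2]
      push_cast
      ring
    rw [Finset.sum_congr rfl (fun k _ => step k), Finset.sum_sub_distrib]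
    congr 1
    · rw [Finset.sum_range_succ (fun k => (-1 : ℤ) ^ (k + 1) * ((k + 1 : ℕ) : ℤ) ^ (j + 1) * (m.choose (e + (k + 1)) : ℤ) * s2 (e + (k + 1)) (k + 1)) m]
      rw [W, Finset.sum_range_succ' (fun k => (-1 : ℤ) ^ k * (k : ℤ) ^ (j + 1) * (m.choose (e + k) : ℤ) * s2 (e + k) k) m]
      rw [Nat.choose_eq_zero_of_lt (by omega : m < e + (m + 1))]
      have hz : ((-1 : ℤ)) ^ (0:ℕ) * ((0:ℕ) : ℤ) ^ (j+1) * (m.choose (e + 0) : ℤ) * s2 (e + 0) 0 = 0 := by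
        rw [Nat.cast_zero, zero_pow (by omega : j + 1 ≠ 0)]; ring
      rw [hz, add_zero]
      push_cast; ring
    · have expand_pow : ∀ k : ℕ, ((k : ℤ) + 1) ^ j = ∑ i ∈ range (j + 1), (k : ℤ) ^ i * (j.choose i : ℤ) := by
        intro k
        rw [add_pow]
        apply Finset.sum_congr rfl; intro i _
        rw [one_pow]; ring
      calc ∑ k ∈ range (m + 1), ((k : ℤ) + 1) ^ j * ((-1) ^ k * (m.choose (e + 1 + k) : ℤ) * s2 (e + 1 + k) k)
          = ∑ k ∈ range (m + 1), ∑ i ∈ range (j + 1), (j.choose i : ℤ) * ((-1) ^ k * (k : ℤ) ^ i * (m.choose (e + 1 + k) : ℤ) * s2 (e + 1 + k) k) := by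
            apply Finset.sum_congr rfl; intro k _
            rw [expand_pow k, Finset.sum_mul]
            apply Finset.sum_congr rfl; intro i _; ring
        _ = ∑ i ∈ range (j + 1), (j.choose i : ℤ) * W i m (e + 1) := by
            rw [Finset.sum_comm]
            apply Finset.sum_congr rfl; intro i _
            rw [W, Finset.mul_sum]
  rw [expand, hT1, hT2]
  ring

lemma alt_sum : ∀ j : ℕ, ∀ m : ℕ, j + 1 ≤ m →
    ∑ k ∈ range (m + 1), (-1 : ℤ) ^ k * (k : ℤ) ^ j * (m.choose k : ℤ) = 0 := by
  intro j
  induction j using Nat.strong_induction_on with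
  | _ j ih =>
    intro m hm
    match j with
    | 0 =>
      have h := Int.alternating_sum_range_choose_of_ne (by omega : m ≠ 0)
      rw [← h]
      apply Finset.sum_congr rfl; intro k _; ring
    | j + 1 =>
      obtain ⟨M, rfl⟩ : ∃ M, m = M + 1 := ⟨m - 1, by omega⟩
      rw [Finset.sum_range_succ' (fun k => (-1 : ℤ) ^ k * (k : ℤ) ^ (j + 1) * ((M + 1).choose k : ℤ)) (M + 1)]
      have hz : ((-1 : ℤ)) ^ (0:ℕ) * ((0:ℕ) : ℤ) ^ (j + 1) * ((M + 1).choose 0 : ℤ) = 0 := by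
        rw [Nat.cast_zero, zero_pow (by omega : j + 1 ≠ 0)]; ring
      rw [hz, add_zero]
      have step : ∀ k : ℕ, (-1 : ℤ) ^ (k + 1) * ((k + 1 : ℕ) : ℤ) ^ (j + 1) * (((M + 1).choose (k + 1)) : ℤ)
          = -((M : ℤ) + 1) * (((k : ℤ) + 1) ^ j * ((-1) ^ k * (M.choose k : ℤ))) := by
        intro k
        have h := Nat.add_one_mul_choose_eq M k
        have h' : ((M + 1 : ℕ) : ℤ) * (M.choose k : ℤ) = ((M + 1).choose (k + 1) : ℤ) * ((k + 1 : ℕ) : ℤ) := by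
          exact_mod_cast congrArg (Nat.cast : ℕ → ℤ) h
        push_cast at h' ⊢
        linear_combination ((-1 : ℤ) ^ k * ((k : ℤ) + 1) ^ j) * h'
      rw [Finset.sum_congr rfl (fun k _ => step k), ← Finset.mul_sum]
      have expand_pow : ∀ k : ℕ, ((k : ℤ) + 1) ^ j = ∑ i ∈ range (j + 1), (k : ℤ) ^ i * (j.choose i : ℤ) := by
        intro k
        rw [add_pow]
        apply Finset.sum_congr rfl; intro i _
        rw [one_pow]; ring
      have swap : ∑ k ∈ range (M + 1), ((k : ℤ) + 1) ^ j * ((-1) ^ k * (M.choose k : ℤ))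
          = ∑ i ∈ range (j + 1), (j.choose i : ℤ) * ∑ k ∈ range (M + 1), (-1 : ℤ) ^ k * (k : ℤ) ^ i * (M.choose k : ℤ) := by
        calc ∑ k ∈ range (M + 1), ((k : ℤ) + 1) ^ j * ((-1) ^ k * (M.choose k : ℤ))
            = ∑ k ∈ range (M + 1), ∑ i ∈ range (j + 1), (j.choose i : ℤ) * ((-1 : ℤ) ^ k * (k : ℤ) ^ i * (M.choose k : ℤ)) := by
              apply Finset.sum_congr rfl; intro k _
              rw [expand_pow k, Finset.sum_mul]
              apply Finset.sum_congr rfl; intro i _; ring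
          _ = ∑ i ∈ range (j + 1), (j.choose i : ℤ) * ∑ k ∈ range (M + 1), (-1 : ℤ) ^ k * (k : ℤ) ^ i * (M.choose k : ℤ) := by
              rw [Finset.sum_comm]
              apply Finset.sum_congr rfl; intro i _
              rw [Finset.mul_sum]
      rw [swap]
      have hterm : ∀ i ∈ range (j + 1), (j.choose i : ℤ) * ∑ k ∈ range (M + 1), (-1 : ℤ) ^ k * (k : ℤ) ^ i * (M.choose k : ℤ) = 0 := by
        intro i hi
        have hij : i < j + 1 := by simpa using hi
        rw [ih i hij M (by omega)]
        ring
      rw [Finset.sum_congr rfl hterm, Finset.sum_const_zero, mul_zero]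

theorem W_zero : ∀ m j e : ℕ, 2 * e + j + 1 ≤ m → W j m e = 0 := by
  intro m
  induction m with
  | zero => intro j e h; omega
  | succ m ih =>
    intro j e h
    match e with
    | 0 =>
      rw [W, ← alt_sum j (m + 1) (by omega)]
      apply Finset.sum_congr rfl
      intro k _
      rw [show 0 + k = k from by omega, s2_diag k]
      ring
    | e + 1 =>
      rw [W_rec j m e]
      rw [ih (j + 1) e (by omega)]
      rw [Finset.sum_range_succ]
      have hsum : ∀ i ∈ range j, (j.choose i : ℤ) * W i m (e + 1) = 0 := by
        intro i hi
        have hij : i < j := by simpa using hi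
        rw [ih i (e + 1) (by omega)]
        ring
      rw [Finset.sum_congr rfl hsum, Finset.sum_const_zero, Nat.choose_self]
      ring

lemma s1_rec (n m : ℕ) : s1 (n + 1) (m + 1) = s1 n m - n * s1 n (m + 1) := rfl
lemma s2_zz : s2 0 0 = 1 := rfl
lemma s1_zz : s1 0 0 = 1 := rfl
lemma s1_zero (n : ℕ) : s1 (n + 1) 0 = 0 := rfl

noncomputable def Ff (n d : ℕ) : ℤ :=
  ∑ k ∈ range (d + 1),
    (-1 : ℤ) ^ k * ((n - 1 + k).choose (d + k) : ℤ) * ((n + d).choose (d - k) : ℤ) * s2 (d + k) k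

noncomputable def Cg (N D k : ℕ) : ℤ :=
  if k ≤ D + 2 then (-1) ^ k * ((N + k).choose (D + 1 + k) : ℤ) * ((N + D + 3).choose (D + 2 - k) : ℤ) else 0

noncomputable def Rg (N D k : ℕ) : ℤ :=
  if k ≤ D + 2 then (D + 2) * (-1) ^ k * ((N + D + 2).choose (2 * D + 3) : ℤ) * ((2 * D + 2).choose (D + 2 - k) : ℤ) else 0

lemma sub_id1 (N D k : ℕ) (hk : k ≤ D + 1) :
    (k : ℤ) * ((N + D + 3).choose (D + 2 - k) : ℤ) + (N + 1) * ((N + D + 2).choose (D + 1 - k) : ℤ)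
      = (D + 2) * ((N + D + 2).choose (D + 2 - k) : ℤ) := by
  have h1 : D + 2 - k = (D + 1 - k) + 1 := by omega
  have hpascal : (N + D + 3).choose (D + 2 - k) = (N + D + 2).choose (D + 1 - k) + (N + D + 2).choose (D + 2 - k) := by
    rw [h1, Nat.choose_succ_succ' (N + D + 2) (D + 1 - k)]
  have h2 := Nat.choose_succ_right_eq (N + D + 2) (D + 1 - k)
  rw [← h1] at h2
  have h3 : N + D + 2 - (D + 1 - k) = N + 1 + k := by omega
  rw [h3] at h2
  have h2' : ((N + D + 2).choose (D + 2 - k) : ℤ) * ((D + 2 : ℤ) - k) = ((N + D + 2).choose (D + 1 - k) : ℤ) * ((N : ℤ) + 1 + k) := by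
    have hc : ((D + 2 - k : ℕ) : ℤ) = (D + 2 : ℤ) - k := by omega
    have h4 := congrArg (Nat.cast : ℕ → ℤ) h2
    push_cast [hc] at h4
    linarith [h4]
  have hpascal' : ((N + D + 3).choose (D + 2 - k) : ℤ) = ((N + D + 2).choose (D + 1 - k) : ℤ) + ((N + D + 2).choose (D + 2 - k) : ℤ) := by
    exact_mod_cast congrArg (Nat.cast : ℕ → ℤ) hpascal
  linear_combination (k : ℤ) * hpascal' - h2'

lemma tri_id (N D k : ℕ) (hk : k ≤ D + 2) (hN : D + 1 ≤ N) :
    ((N + D + 2).choose (2 * D + 3) : ℤ) * ((2 * D + 3).choose (D + 2 - k) : ℤ)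
      = ((N + D + 2).choose (D + 2 - k) : ℤ) * ((N + k).choose (D + 1 + k) : ℤ) := by
  have h := Nat.choose_mul (n := N + D + 2) (show D + 2 - k ≤ 2 * D + 3 by omega)
  have h1 : N + D + 2 - (D + 2 - k) = N + k := by omega
  have h2 : 2 * D + 3 - (D + 2 - k) = D + 1 + k := by omega
  rw [h1, h2] at h
  exact_mod_cast congrArg (Nat.cast : ℕ → ℤ) h

lemma claim1 (N D k : ℕ) (hk : k ≤ D + 2) :
    (-1 : ℤ) ^ k * ((N + 1 + k).choose (D + 2 + k) : ℤ) * ((N + D + 4).choose (D + 2 - k) : ℤ)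
      - (-1 : ℤ) ^ k * ((N + k).choose (D + 2 + k) : ℤ) * ((N + D + 3).choose (D + 2 - k) : ℤ)
      = Cg N D k - Cg N D (k + 1) := by
  rcases Nat.lt_or_ge k (D + 2) with hlt | hge
  · -- k ≤ D + 1
    rw [Cg, Cg, if_pos hk, if_pos (by omega : k + 1 ≤ D + 2)]
    have e1 : D + 2 - (k + 1) = D + 1 - k := by omega
    rw [e1]
    have q1 : ((N + D + 4).choose (D + 2 - k) : ℤ)
        = ((N + D + 3).choose (D + 1 - k) : ℤ) + ((N + D + 3).choose (D + 2 - k) : ℤ) := by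
      have h1 : D + 2 - k = (D + 1 - k) + 1 := by omega
      rw [h1, show N + D + 4 = (N + D + 3) + 1 from rfl, Nat.choose_succ_succ' (N + D + 3) (D + 1 - k)]
      push_cast; ring
    have q2 : ((N + 1 + k).choose (D + 2 + k) : ℤ)
        = ((N + k).choose (D + 1 + k) : ℤ) + ((N + k).choose (D + 2 + k) : ℤ) := by
      rw [show N + 1 + k = (N + k) + 1 from by ring, show D + 2 + k = (D + 1 + k) + 1 from by ring,
        Nat.choose_succ_succ' (N + k) (D + 1 + k)]
      push_cast; ring
    rw [show N + (k + 1) = N + 1 + k from by ring, show D + 1 + (k + 1) = D + 2 + k from by ring]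
    linear_combination ((-1 : ℤ) ^ k * ((N + 1 + k).choose (D + 2 + k) : ℤ)) * q1
      + ((-1 : ℤ) ^ k * ((N + D + 3).choose (D + 2 - k) : ℤ)) * q2
  · -- k = D + 2
    have hk2 : k = D + 2 := by omega
    subst hk2
    rw [Cg, Cg, if_pos (le_refl _), if_neg (by omega)]
    have e0 : D + 2 - (D + 2) = 0 := by omega
    rw [e0]
    have q2 : ((N + 1 + (D + 2)).choose (D + 2 + (D + 2)) : ℤ)
        = ((N + (D + 2)).choose (D + 1 + (D + 2)) : ℤ) + ((N + (D + 2)).choose (D + 2 + (D + 2)) : ℤ) := by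
      rw [show N + 1 + (D + 2) = (N + (D + 2)) + 1 from by ring,
        show D + 2 + (D + 2) = (D + 1 + (D + 2)) + 1 from by ring,
        Nat.choose_succ_succ' (N + (D + 2)) (D + 1 + (D + 2))]
      push_cast; ring
    rw [Nat.choose_zero_right, Nat.choose_zero_right]
    linear_combination ((-1 : ℤ) ^ (D + 2)) * q2

lemma claim2 (N D k : ℕ) (hN : D + 1 ≤ N) :
    (k : ℤ) * Cg N D k
      + (N + 1) * (if k ≤ D + 1 then (-1 : ℤ) ^ k * ((N + k).choose (D + 1 + k) : ℤ) * ((N + D + 2).choose (D + 1 - k) : ℤ) else 0)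
      = Rg N D k - Rg N D (k + 1) := by
  rcases Nat.lt_or_ge k (D + 2) with hlt | hge
  · -- k ≤ D + 1
    have hk1 : k ≤ D + 1 := by omega
    rw [Cg, Rg, Rg, if_pos (by omega : k ≤ D + 2), if_pos (by omega : k ≤ D + 2),
      if_pos (by omega : k + 1 ≤ D + 2), if_pos hk1]
    have e1 : D + 2 - (k + 1) = D + 1 - k := by omega
    rw [e1]
    have pas : ((2 * D + 3).choose (D + 2 - k) : ℤ)
        = ((2 * D + 2).choose (D + 1 - k) : ℤ) + ((2 * D + 2).choose (D + 2 - k) : ℤ) := by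
      have h1 : D + 2 - k = (D + 1 - k) + 1 := by omega
      rw [h1, show 2 * D + 3 = (2 * D + 2) + 1 from rfl, Nat.choose_succ_succ' (2 * D + 2) (D + 1 - k)]
      push_cast; ring
    have hs := sub_id1 N D k hk1
    have ht := tri_id N D k (by omega) hN
    linear_combination ((-1 : ℤ) ^ k * ((N + k).choose (D + 1 + k) : ℤ)) * hs
      - ((D : ℤ) + 2) * (-1 : ℤ) ^ k * ht
      + ((D : ℤ) + 2) * (-1 : ℤ) ^ k * ((N + D + 2).choose (2 * D + 3) : ℤ) * pas
  · rcases Nat.lt_or_ge (D + 2) k with hgt | hle2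
    · -- k ≥ D + 3
      rw [Cg, Rg, Rg, if_neg (by omega), if_neg (by omega), if_neg (by omega), if_neg (by omega)]
      ring
    · -- k = D + 2
      have hk2 : k = D + 2 := by omega
      subst hk2
      rw [Cg, Rg, Rg, if_pos (le_refl _), if_pos (le_refl _), if_neg (by omega), if_neg (by omega)]
      have e0 : D + 2 - (D + 2) = 0 := by omega
      rw [e0, Nat.choose_zero_right, Nat.choose_zero_right]
      rw [show N + (D + 2) = N + D + 2 from by ring, show D + 1 + (D + 2) = 2 * D + 3 from by ring]
      push_cast
      ring

lemma Cg_top (N D : ℕ) : Cg N D (D + 2 + 1) = 0 := by rw [Cg, if_neg (by omega)]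

lemma Rg_top (N D : ℕ) : Rg N D (D + 2 + 1) = 0 := by rw [Rg, if_neg (by omega)]

lemma key (N D : ℕ) (hN : D + 1 ≤ N) :
    Ff (N + 2) (D + 2) = Ff (N + 1) (D + 2) - (N + 1) * Ff (N + 1) (D + 1) := by
  have e1 : Ff (N + 2) (D + 2) - Ff (N + 1) (D + 2)
      = ∑ k ∈ range (D + 2 + 1), (Cg N D k - Cg N D (k + 1)) * s2 (D + 1 + 1 + k) k := by
    rw [Ff, Ff, ← Finset.sum_sub_distrib]
    apply Finset.sum_congr rfl
    intro k hk
    have hk' : k ≤ D + 2 := by simpa using Nat.lt_succ_iff.mp (Finset.mem_range.mp hk)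
    rw [show N + 2 - 1 + k = N + 1 + k from by omega, show N + 1 - 1 + k = N + k from by omega,
      show N + 2 + (D + 2) = N + D + 4 from by ring, show N + 1 + (D + 2) = N + D + 3 from by ring,
      show D + 1 + 1 + k = D + 2 + k from by ring]
    have hc := claim1 N D k hk'
    linear_combination s2 (D + 2 + k) k * hc
  have e2 := abel (Cg N D) (D + 2) (D + 1)
  rw [Cg_top N D, zero_mul, sub_zero] at e2
  have e3 : (N + 1 : ℤ) * Ff (N + 1) (D + 1)
      = ∑ k ∈ range (D + 2 + 1),
          ((N : ℤ) + 1) * (if k ≤ D + 1 then (-1 : ℤ) ^ k * ((N + k).choose (D + 1 + k) : ℤ) * ((N + D + 2).choose (D + 1 - k) : ℤ) else 0)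
            * s2 (D + 1 + k) k := by
    rw [Finset.sum_range_succ, if_neg (by omega : ¬ (D + 2 ≤ D + 1))]
    rw [Ff, Finset.mul_sum]
    have : ∀ k ∈ range (D + 1 + 1),
        ((N : ℤ) + 1) * ((-1 : ℤ) ^ k * (((N + 1) - 1 + k).choose (D + 1 + k) : ℤ) * (((N + 1) + (D + 1)).choose (D + 1 - k) : ℤ) * s2 (D + 1 + k) k)
          = ((N : ℤ) + 1) * (if k ≤ D + 1 then (-1 : ℤ) ^ k * ((N + k).choose (D + 1 + k) : ℤ) * ((N + D + 2).choose (D + 1 - k) : ℤ) else 0)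
            * s2 (D + 1 + k) k := by
      intro k hk
      have hk' : k ≤ D + 1 := by simpa using Nat.lt_succ_iff.mp (Finset.mem_range.mp hk)
      rw [if_pos hk', show N + 1 - 1 + k = N + k from by omega, show N + 1 + (D + 1) = N + D + 2 from by ring]
      ring
    rw [Finset.sum_congr rfl this]
    ring
  have combine : Ff (N + 2) (D + 2) - Ff (N + 1) (D + 2) + (N + 1 : ℤ) * Ff (N + 1) (D + 1)
      = ∑ k ∈ range (D + 2 + 1), (Rg N D k - Rg N D (k + 1)) * s2 (D + 1 + k) k := by
    rw [e1, e2, e3, ← Finset.sum_add_distrib]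
    apply Finset.sum_congr rfl
    intro k _
    have hc := claim2 N D k hN
    linear_combination s2 (D + 1 + k) k * hc
  have e4 := abel (Rg N D) (D + 2) D
  rw [Rg_top N D, zero_mul, sub_zero] at e4
  have e5 : ∑ k ∈ range (D + 2 + 1), (k : ℤ) * Rg N D k * s2 (D + k) k
      = ((D : ℤ) + 2) * ((N + D + 2).choose (2 * D + 3) : ℤ) * W 1 (2 * D + 2) D := by
    rw [W, Finset.mul_sum]
    have hsub : range (D + 2 + 1) ⊆ range (2 * D + 2 + 1) := by
      apply Finset.range_subset_range.mpr; omega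
    rw [← Finset.sum_subset hsub ?v]
    · apply Finset.sum_congr rfl
      intro k hk
      have hk' : k ≤ D + 2 := by simpa using Nat.lt_succ_iff.mp (Finset.mem_range.mp hk)
      rw [Rg, if_pos hk']
      have hsym : (2 * D + 2).choose (D + 2 - k) = (2 * D + 2).choose (D + k) := by
        rw [show D + 2 - k = 2 * D + 2 - (D + k) from by omega]
        exact Nat.choose_symm (by omega)
      rw [hsym]
      push_cast
      ring
    · intro k hk1 hk2
      have hk3 : D + 2 < k := by
        simp only [Finset.mem_range] at hk1 hk2
        omega
      rw [Nat.choose_eq_zero_of_lt (by omega : 2 * D + 2 < D + k)]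
      push_cast
      ring
  have e6 : W 1 (2 * D + 2) D = 0 := W_zero (2 * D + 2) 1 D (by omega)
  have final : Ff (N + 2) (D + 2) - Ff (N + 1) (D + 2) + (N + 1 : ℤ) * Ff (N + 1) (D + 1) = 0 := by
    rw [combine, e4, e5, e6]
    ring
  push_cast at final ⊢
  linarith [final]

lemma Ff_zero (n : ℕ) : Ff n 0 = 1 := by
  rw [Ff, Finset.sum_range_one]
  norm_num [s2_zz]

lemma Ff_diag (n : ℕ) (hn : 1 ≤ n) : Ff n n = 0 := by
  rw [Ff]
  apply Finset.sum_eq_zero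
  intro k _
  rw [Nat.choose_eq_zero_of_lt (by omega : n - 1 + k < n + k)]
  push_cast; ring

lemma Ff_one (n : ℕ) : Ff (n + 1) 1 = -(((n + 1).choose 2 : ℕ) : ℤ) := by
  rw [Ff, Finset.sum_range_succ, Finset.sum_range_one]
  rw [show (1 : ℕ) + 0 = 1 from rfl, s2_zero 0]
  rw [show n + 1 - 1 + 1 = n + 1 from by omega]
  have h21 : s2 (1 + 1) 1 = 1 := by
    rw [s2_rec, s2_diag 1, s2_zero 0]; ring
  rw [h21]
  norm_num

lemma key1 (M : ℕ) : Ff (M + 2) 1 = Ff (M + 1) 1 - ((M : ℤ) + 1) * Ff (M + 1) 0 := by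
  rw [Ff_one (M + 1), Ff_one M, Ff_zero]
  have : (M + 2).choose 2 = (M + 1).choose 1 + (M + 1).choose 2 := Nat.choose_succ_succ' (M + 1) 1
  rw [this, Nat.choose_one_right]
  push_cast; ring

lemma main : ∀ n d : ℕ, d ≤ n → s1 n (n - d) = Ff n d := by
  intro n
  induction n with
  | zero =>
    intro d hd
    have h0 : d = 0 := by omega
    subst h0
    rw [Ff_zero]
    exact s1_zz
  | succ n ih =>
    intro d hd
    match d, hd with
    | 0, _ => rw [Nat.sub_zero, s1_diag, Ff_zero]
    | d + 1, hd =>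
      rcases Nat.lt_or_ge d n with hlt | hge
      · -- 1 ≤ d + 1 ≤ n
        have h1 : n + 1 - (d + 1) = (n - (d + 1)) + 1 := by omega
        rw [h1, s1_rec]
        rw [show n - (d + 1) + 1 = n - d from by omega]
        rw [ih (d + 1) (by omega), ih d (by omega)]
        match d with
        | 0 =>
          obtain ⟨M, rfl⟩ : ∃ M, n = M + 1 := ⟨n - 1, by omega⟩
          have hk := key1 M
          push_cast
          linarith [hk]
        | D + 1 =>
          obtain ⟨N, rfl⟩ : ∃ N, n = N + 1 := ⟨n - 1, by omega⟩
          have hk := key N D (by omega)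
          push_cast at hk ⊢
          linarith [hk]
      · -- d + 1 = n + 1
        have h2 : d = n := by omega
        subst h2
        rw [Nat.sub_self, Ff_diag (d + 1) (by omega)]
        exact s1_zero d

theorem stmt12 (n m : ℕ) (h : m ≤ n) :
    s1 n m = ∑ k ∈ Finset.range (n - m + 1),
      (-1 : ℤ) ^ k * (n - 1 + k).choose (n - m + k) * (2 * n - m).choose (n - m - k)
        * s2 (n - m + k) k := by
  have hm := main n (n - m) (by omega)
  rw [show n - (n - m) = m from by omega] at hm
  rw [hm, Ff]
  apply Finset.sum_congr rfl
  intro k _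
  rw [show n + (n - m) = 2 * n - m from by omega]
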